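/- arXiv:2509.07144 — 4 statements merged into one kernel-verified Lean document; each statement's English description precedes it below -/
import Mathlib

section
/- Let k ≥ 3 be an integer and let L be a graph with at least 2k+1 vertices. Suppose that every pair of non-adjacent vertices of L has at least 3k−2 common neighbors. Then L is k-linked. -/
open SimpleGraph

/-- `G` is `k`-linked: any `2k` distinct vertices, grouped into `k` pairs, can be joined
by `k` pairwise vertex-disjoint paths. -/
def Linked {V : Type} (G : SimpleGraph V) (k : ℕ) : Prop :=
  ∀ u v : Fin k → V,
    Function.Injective (Sum.elim u v) →
    ∃ P : (i : Fin k) → G.Walk (u i) (v i),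
      (∀ i, (P i).IsPath) ∧
      ∀ i j, i ≠ j → ∀ x ∈ (P i).support, x ∉ (P j).support

/-- `G` is `(2,…,2,1)`-knitted with `k` twos: any `k` pairs of vertices together with one
further vertex `u₀` (all distinct) can be linked by `k` pairwise vertex-disjoint paths,
each avoiding `u₀`. -/
def KnittedOne {V : Type} (G : SimpleGraph V) (k : ℕ) : Prop :=
  ∀ (u₀ : V) (u v : Fin k → V),
    Function.Injective (Sum.elim (Sum.elim u v) (fun _ : Unit => u₀)) →
    ∃ P : (i : Fin k) → G.Walk (u i) (v i),
      (∀ i, (P i).IsPath) ∧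
      (∀ i, u₀ ∉ (P i).support) ∧
      ∀ i j, i ≠ j → ∀ x ∈ (P i).support, x ∉ (P j).support

/-- `H` is a minor of `G`, witnessed by pairwise-disjoint nonempty connected branch sets. -/
def IsMinor {W V : Type} (H : SimpleGraph W) (G : SimpleGraph V) : Prop :=
  ∃ f : W → Set V,
    (∀ w, (f w).Nonempty) ∧
    (∀ w, (G.induce (f w)).Connected) ∧
    (Pairwise fun w w' => Disjoint (f w) (f w')) ∧
    (∀ ⦃w w'⦄, H.Adj w w' → ∃ a ∈ f w, ∃ b ∈ f w', G.Adj a b)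

/-- `H` is a proper minor of `G`. -/
def IsProperMinor {W V : Type} (H : SimpleGraph W) (G : SimpleGraph V) : Prop :=
  IsMinor H G ∧ ¬ IsMinor G H

/-- `G` is `k`-contraction-critical: its chromatic number is `k`, but every proper minor
is `(k-1)`-colorable. -/
def ContractionCritical {V : Type} (k : ℕ) (G : SimpleGraph V) : Prop :=
  G.chromaticNumber = (k : ENat) ∧
  ∀ (W : Type) (H : SimpleGraph W), IsProperMinor H G → H.Colorable (k - 1)

/-- `G` is `t`-connected: more than `t` vertices, and deleting any fewer than `t`
vertices leaves it connected. -/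
def KConnected {V : Type} [Fintype V] (G : SimpleGraph V) (t : ℕ) : Prop :=
  t < Fintype.card V ∧
  ∀ S : Finset V, S.card < t → (G.induce {v : V | v ∉ S}).Connected

/-- Independence number of the subgraph of `G` induced on `S`. -/
noncomputable def alphaOn {V : Type} (G : SimpleGraph V) (S : Set V) : ℕ :=
  sSup {n | ∃ t : Finset V, ↑t ⊆ S ∧ t.card = n ∧
    ∀ a ∈ t, ∀ b ∈ t, a ≠ b → ¬ G.Adj a b}

/-- Number of common neighbors of `a` and `b` in `G`. -/
noncomputable def commonNbrs {V : Type} (G : SimpleGraph V) (a b : V) : ℕ :=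
  {x : V | G.Adj a x ∧ G.Adj b x}.ncard

/- A non-adjacent pair `uᵢ, vᵢ` has at least `(3k - 2) - (2k - 2) = k` common
neighbours outside the `2k` terminals. As there are at most `k` such pairs, Hall's theorem picks
distinct midpoints `mᵢ` for all of them, and the paths `uᵢvᵢ` resp. `uᵢmᵢvᵢ` are disjoint. -/

open Finset

theorem Finset.exists_injective_forall_mem_of_card_le {ι α : Type*} [Fintype ι] [DecidableEq α]
    (t : ι → Finset α) (ht : ∀ i, Fintype.card ι ≤ #(t i)) :
    ∃ f : ι → α, Function.Injective f ∧ ∀ i, f i ∈ t i := by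
  refine (all_card_le_biUnion_card_iff_exists_injective t).mp fun s => ?_
  obtain rfl | ⟨i, hi⟩ := s.eq_empty_or_nonempty
  · simp
  · calc #s ≤ Fintype.card ι := card_le_univ s
      _ ≤ #(t i) := ht i
      _ ≤ #(s.biUnion t) := card_le_card (subset_biUnion_of_mem t hi)

namespace SimpleGraph

variable {V : Type}

theorem commonNbrs_add_two_le [Fintype V] [DecidableEq V] (G : SimpleGraph V) [DecidableRel G.Adj]
    {a b : V} (hab : a ≠ b) {F : Finset V} (ha : a ∈ F) (hb : b ∈ F) :
    commonNbrs G a b + 2 ≤ #{x | G.Adj a x ∧ G.Adj b x ∧ x ∉ F} + #F := by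
  set S : Finset V := {x | G.Adj a x ∧ G.Adj b x ∧ x ∉ F}
  have hsplit : {x | G.Adj a x ∧ G.Adj b x} ⊆ ↑(S ∪ (F.erase a).erase b) := by
    intro x ⟨hax, hbx⟩
    by_cases hx : x ∈ F
    · simp [hx, hax.ne', hbx.ne']
    · simp [S, hx, hax, hbx]
  have hF : #((F.erase a).erase b) + 2 = #F := by
    rw [card_erase_of_mem (mem_erase.mpr ⟨hab.symm, hb⟩), card_erase_of_mem ha]
    have : 2 ≤ #F := by
      simpa [card_pair hab] using card_le_card (insert_subset ha (singleton_subset_iff.mpr hb))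
    omega
  calc commonNbrs G a b + 2
      ≤ #(S ∪ (F.erase a).erase b) + 2 := by
        rw [commonNbrs, ← Set.ncard_coe_finset]
        gcongr
        exact Set.toFinite _
    _ ≤ #S + #F := by
        have := card_union_le S ((F.erase a).erase b)
        omega

section Midpoints

variable {G : SimpleGraph V} {k : ℕ} {u v : Fin k → V} (m : {i // ¬ G.Adj (u i) (v i)} → V)

/- Vertices are labelled by `(Fin k ⊕ Fin k) ⊕ {i // _}` via `u`, `v` and `m`; every vertex of the
path from `u i` to `v i` carries a label of pair `i`, so an injective labelling separates the paths. -/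
theorem exists_isPath_support_labelled (hum : ∀ i h, G.Adj (u i) (m ⟨i, h⟩))
    (hmv : ∀ i h, G.Adj (m ⟨i, h⟩) (v i)) (i : Fin k) (huv : u i ≠ v i) :
    ∃ P : G.Walk (u i) (v i), P.IsPath ∧ ∀ x ∈ P.support,
      ∃ l, Sum.elim (Sum.elim id id) Subtype.val l = i ∧ Sum.elim (Sum.elim u v) m l = x := by
  by_cases h : G.Adj (u i) (v i)
  · refine ⟨h.toWalk, h.isPath_toWalk, ?_⟩
    simp only [Adj.toWalk, Walk.support_cons, Walk.support_nil, List.mem_cons,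
      List.not_mem_nil, or_false]
    rintro x (rfl | rfl)
    exacts [⟨.inl (.inl i), rfl, rfl⟩, ⟨.inl (.inr i), rfl, rfl⟩]
  · refine ⟨.cons (hum i h) (hmv i h).toWalk, ?_, ?_⟩
    · simp [Walk.cons_isPath_iff, (hum i h).ne, (hmv i h).ne, huv]
    · simp only [Adj.toWalk, Walk.support_cons, Walk.support_nil, List.mem_cons,
        List.not_mem_nil, or_false]
      rintro x (rfl | rfl | rfl)
      exacts [⟨.inl (.inl i), rfl, rfl⟩, ⟨.inr ⟨i, h⟩, rfl, rfl⟩, ⟨.inl (.inr i), rfl, rfl⟩]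

theorem exists_disjoint_paths_of_injective_midpoints (hm : (Sum.elim (Sum.elim u v) m).Injective)
    (hum : ∀ i h, G.Adj (u i) (m ⟨i, h⟩)) (hmv : ∀ i h, G.Adj (m ⟨i, h⟩) (v i)) :
    ∃ P : (i : Fin k) → G.Walk (u i) (v i),
      (∀ i, (P i).IsPath) ∧ ∀ i j, i ≠ j → ∀ x ∈ (P i).support, x ∉ (P j).support := by
  have huv i : u i ≠ v i := hm.ne (a₁ := .inl (.inl i)) (a₂ := .inl (.inr i)) (by simp)
  choose P hP hsupp using fun i => exists_isPath_support_labelled m hum hmv i (huv i)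
  refine ⟨P, hP, fun i j hij x hxi hxj => hij ?_⟩
  obtain ⟨l, rfl, rfl⟩ := hsupp i x hxi
  obtain ⟨l', rfl, hl'⟩ := hsupp j _ hxj
  rw [hm hl']

end Midpoints

end SimpleGraph

theorem stmt0_general {V : Type} [Fintype V] (k : ℕ) (L : SimpleGraph V)
    (hcommon : ∀ a b : V, a ≠ b → ¬ L.Adj a b → 3 * k - 2 ≤ commonNbrs L a b) :
    Linked L k := by
  classical
  intro u v huv
  set T : Finset V := univ.image (Sum.elim u v)
  have hT : #T = 2 * k := by
    rw [card_image_of_injective _ huv, card_univ, Fintype.card_sum, Fintype.card_fin]; ring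
  have hmem i : u i ∈ T ∧ v i ∈ T :=
    ⟨mem_image_of_mem _ (mem_univ (Sum.inl i)), mem_image_of_mem _ (mem_univ (Sum.inr i))⟩
  obtain ⟨m, hm_inj, hm⟩ := exists_injective_forall_mem_of_card_le
    (fun i : {i // ¬ L.Adj (u i) (v i)} => {x | L.Adj (u i) x ∧ L.Adj (v i) x ∧ x ∉ T})
    fun ⟨i, hi⟩ => by
      dsimp only
      have hne : u i ≠ v i := huv.ne Sum.inl_ne_inr
      have hpairs := (Fintype.card_subtype_le fun i => ¬ L.Adj (u i) (v i)).trans_eq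
        (Fintype.card_fin k)
      have := hcommon _ _ hne hi
      have := commonNbrs_add_two_le L hne (hmem i).1 (hmem i).2
      omega
  simp only [mem_filter, mem_univ, true_and] at hm
  refine exists_disjoint_paths_of_injective_midpoints m (huv.sumElim hm_inj fun l i h => ?_)
    (fun i h => (hm ⟨i, h⟩).1) fun i h => (hm ⟨i, h⟩).2.1.symm
  exact (hm i).2.2 (h ▸ mem_image_of_mem _ (mem_univ l))

theorem stmt0 {V : Type} [Fintype V] (k : ℕ) (hk : 3 ≤ k) (L : SimpleGraph V)
    (hcard : 2 * k + 1 ≤ Fintype.card V)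
    (hcommon : ∀ a b : V, a ≠ b → ¬ L.Adj a b → 3 * k - 2 ≤ commonNbrs L a b) :
    Linked L k :=
  stmt0_general k L hcommon
end

section
/- Let k ≥ 3 and let L be a graph with |V(L)| ≥ 2k+1. Suppose every set of k pairs of distinct vertices of L can be labeled (u_1,v_1), ..., (u_k,v_k) so that for every i ∈ {1,...,k}, either u_i v_i is an edge of L or u_i and v_i have at least 2k−2+i common neighbors. Then L is k-linked. -/
open SimpleGraph

/-!
Join every pair with adjacent ends by that edge and every other pair through a common
neighbour that is not one of the `2k` terminals. In the given order, the `i`-th pair (counting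
from `0`) has at least `2k - 1 + i` common neighbours, at most `2k - 2` of which are terminals,
so it has more than `i` candidate midpoints; Hall's theorem then makes the midpoints distinct.
-/

open Finset in
theorem Finset.exists_injective_mem_of_rank_lt_card {ι α : Type*} [DecidableEq α]
    (t : ι → Finset α) (r : ι → ℕ) (hr : Function.Injective r) (ht : ∀ i, r i < #(t i)) :
    ∃ f : ι → α, Function.Injective f ∧ ∀ i, f i ∈ t i := by
  refine (all_card_le_biUnion_card_iff_exists_injective t).1 fun s => ?_
  rcases s.eq_empty_or_nonempty with rfl | hs
  · simp
  -- Hall's condition: `s` has at most `r i + 1` members, `i` the member of largest rank.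
  obtain ⟨i, his, hmax⟩ := s.exists_max_image r hs
  calc #s = #(s.image r) := (card_image_of_injective s hr).symm
    _ ≤ #(range (r i + 1)) := card_le_card fun n hn => by
        obtain ⟨j, hj, rfl⟩ := mem_image.1 hn
        exact mem_range.2 (Nat.lt_succ_of_le (hmax j hj))
    _ = r i + 1 := card_range _
    _ ≤ #(t i) := ht i
    _ ≤ #(s.biUnion t) := card_le_card (subset_biUnion_of_mem t his)

theorem SimpleGraph.ncard_commonNeighbors_add_two_le {V : Type} (G : SimpleGraph V)
    {a b : V} {E : Set V} (hE : E.Finite) (ha : a ∈ E) (hb : b ∈ E) (hab : a ≠ b)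
    (hC : (G.commonNeighbors a b).Finite) :
    (G.commonNeighbors a b).ncard + 2 ≤ (G.commonNeighbors a b \ E).ncard + E.ncard := by
  have hsplit := Set.ncard_inter_add_ncard_sdiff_eq_ncard (G.commonNeighbors a b) E hC
  have hdisj : Disjoint (G.commonNeighbors a b ∩ E) {a, b} := by
    refine Set.disjoint_left.2 fun x hx hab' => ?_
    rcases hab' with rfl | rfl
    exacts [G.notMem_commonNeighbors_left _ _ hx.1, G.notMem_commonNeighbors_right _ _ hx.1]
  have hinter : (G.commonNeighbors a b ∩ E).ncard + 2 ≤ E.ncard := by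
    rw [← Set.ncard_pair hab, ← Set.ncard_union_eq hdisj (hE.subset Set.inter_subset_right)]
    exact Set.ncard_le_ncard (Set.union_subset Set.inter_subset_right
      (Set.insert_subset ha (Set.singleton_subset_iff.2 hb))) hE
  omega

theorem SimpleGraph.exists_disjoint_paths_of_midpoints {V : Type} {G : SimpleGraph V} {k : ℕ}
    {u v : Fin k → V} (huv : Function.Injective (Sum.elim u v))
    (m : {i // ¬ G.Adj (u i) (v i)} → V) (hm : Function.Injective m)
    (hm_common : ∀ i : {i // ¬ G.Adj (u i) (v i)}, m i ∈ G.commonNeighbors (u i) (v i))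
    (hm_end : ∀ i, m i ∉ Set.range (Sum.elim u v)) :
    ∃ P : (i : Fin k) → G.Walk (u i) (v i),
      (∀ i, (P i).IsPath) ∧
        ∀ i j, i ≠ j → ∀ x ∈ (P i).support, x ∉ (P j).support := by
  have short_path (i : Fin k) : ∃ W : G.Walk (u i) (v i), W.IsPath ∧ ∀ x ∈ W.support,
      (∃ e, (e = .inl i ∨ e = .inr i) ∧ Sum.elim u v e = x) ∨ ∃ h, m ⟨i, h⟩ = x := by
    by_cases h : G.Adj (u i) (v i)
    · refine ⟨h.toWalk, h.isPath_toWalk, fun x hx => .inl ?_⟩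
      simp only [Adj.toWalk, Walk.support_cons, Walk.support_nil, List.mem_cons,
        List.not_mem_nil, or_false] at hx
      rcases hx with rfl | rfl
      exacts [⟨.inl i, .inl rfl, rfl⟩, ⟨.inr i, .inr rfl, rfl⟩]
    · have hum : G.Adj (u i) (m ⟨i, h⟩) := (hm_common ⟨i, h⟩).1
      have hmv : G.Adj (m ⟨i, h⟩) (v i) := (hm_common ⟨i, h⟩).2.symm
      have hu : u i ≠ m ⟨i, h⟩ := fun e => hm_end _ ⟨.inl i, e⟩
      have hv : m ⟨i, h⟩ ≠ v i := fun e => hm_end _ ⟨.inr i, e.symm⟩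
      have huv' : u i ≠ v i := fun e => Sum.inl_ne_inr (huv e)
      refine ⟨.cons hum (.cons hmv .nil), by simp [Walk.isPath_def, hu, hv, huv'],
        fun x hx => ?_⟩
      simp only [Walk.support_cons, Walk.support_nil, List.mem_cons, List.not_mem_nil,
        or_false] at hx
      rcases hx with rfl | rfl | rfl
      exacts [.inl ⟨.inl i, .inl rfl, rfl⟩, .inr ⟨h, rfl⟩, .inl ⟨.inr i, .inr rfl, rfl⟩]
  choose P hP mem_support using short_path
  refine ⟨P, hP, fun i j hij x hxi hxj => ?_⟩
  rcases mem_support i x hxi with ⟨e, he, rfl⟩ | ⟨h, rfl⟩ <;>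
    rcases mem_support j _ hxj with ⟨e', he', hx⟩ | ⟨h', hx⟩
  · obtain rfl := huv hx
    rcases he with rfl | rfl <;> rcases he' with he' | he' <;> simp_all
  · exact hm_end _ ⟨e, hx.symm⟩
  · exact hm_end _ ⟨e', hx⟩
  · exact hij (congrArg Subtype.val (hm hx)).symm

theorem stmt2_general {V : Type} (k : ℕ) (L : SimpleGraph V)
    (hpairs : ∀ u v : Fin k → V, Function.Injective (Sum.elim u v) →
      ∃ σ : Equiv.Perm (Fin k), ∀ i : Fin k,
        L.Adj (u (σ i)) (v (σ i)) ∨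
          2 * k - 2 + (i.val + 1) ≤ commonNbrs L (u (σ i)) (v (σ i))) :
    Linked L k := by
  classical
  intro u v huv
  obtain ⟨σ, hσ⟩ := hpairs u v huv
  set E := Set.range (Sum.elim u v)
  have hE : E.ncard = 2 * k := by
    rw [Set.ncard_range_of_injective huv]
    simp [two_mul]
  have hcommon (i : {i // ¬ L.Adj (u i) (v i)}) :
      2 * k - 2 + ((σ.symm i).val + 1) ≤ (L.commonNeighbors (u i) (v i)).ncard := by
    have := (hσ (σ.symm i)).resolve_left (by simpa using i.2)
    rw [σ.apply_symm_apply] at this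
    exact this
  have hC (i : {i // ¬ L.Adj (u i) (v i)}) : (L.commonNeighbors (u i) (v i)).Finite :=
    Set.finite_of_ncard_pos (by have := hcommon i; omega)
  have hfin (i : {i // ¬ L.Adj (u i) (v i)}) : (L.commonNeighbors (u i) (v i) \ E).Finite :=
    (hC i).sdiff
  obtain ⟨m, hm, hmE⟩ := Finset.exists_injective_mem_of_rank_lt_card
    (fun i => (hfin i).toFinset) (fun i => (σ.symm i).val)
    (fun i j h => Subtype.ext (σ.symm.injective (Fin.ext h))) fun i => by
      have := L.ncard_commonNeighbors_add_two_le (a := u i) (b := v i) (Set.toFinite E)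
        ⟨.inl i, rfl⟩ ⟨.inr i, rfl⟩ (fun h => Sum.inl_ne_inr (huv h)) (hC i)
      have := hcommon i
      rw [← Set.ncard_eq_toFinset_card _ (hfin i)]
      omega
  simp only [Set.Finite.mem_toFinset, Set.mem_sdiff] at hmE
  exact exists_disjoint_paths_of_midpoints huv m hm (fun i => (hmE i).1) fun i => (hmE i).2

theorem stmt2 {V : Type} [Fintype V] (k : ℕ) (hk : 3 ≤ k) (L : SimpleGraph V)
    (hcard : 2 * k + 1 ≤ Fintype.card V)
    (hpairs : ∀ u v : Fin k → V, Function.Injective (Sum.elim u v) →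
      ∃ σ : Equiv.Perm (Fin k), ∀ i : Fin k,
        L.Adj (u (σ i)) (v (σ i)) ∨
          2 * k - 2 + (i.val + 1) ≤ commonNbrs L (u (σ i)) (v (σ i))) :
    Linked L k :=
  stmt2_general k L hpairs
end

section
/- If G is a k-contraction-critical graph, then for every vertex u of G the independence number of the subgraph induced on the neighborhood N(u) is at most d(u) − k + 2. -/
open SimpleGraph

/-!
Let `I` be a nonempty independent set of neighbours of `u`. Contracting the star from `u` to
`I` gives a proper minor, hence a `(k-1)`-colouring of it, which pulls back to a colouring of
`G - u` giving all of `I` the colour of `u`. Then `N(u)` sees at most `d(u) - |I| + 1` colours,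
so unless `|I| ≤ d(u) - k + 2` a colour is left over for `u`, contradicting `χ(G) = k`.
For `I = ∅` the bound is `d(u) ≥ k - 1`, proved in the same way by deleting `u`.
-/

namespace SimpleGraph

variable {V W : Type} {G : SimpleGraph V}

lemma induce_connected_of_forall_adj {s : Set V} {u : V} (hu : u ∈ s)
    (hadj : ∀ v ∈ s, v ≠ u → G.Adj u v) : (G.induce s).Connected := by
  refine induce_connected_of_patches u hu fun {v} hv => ?_
  rcases eq_or_ne v u with rfl | hvu
  · exact ⟨{v}, by simpa using hv, rfl, rfl, .rfl⟩
  · exact ⟨{u, v}, Set.insert_subset hu (Set.singleton_subset_iff.mpr hv), by simp, by simp,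
      (induce_pair_connected_of_adj (hadj v hv hvu)).preconnected _ _⟩

def contract (G : SimpleGraph V) (π : V → W) : SimpleGraph W :=
  fromRel fun a b => ∃ x y, π x = a ∧ π y = b ∧ G.Adj x y

lemma contract_adj_of_adj {π : V → W} {x y : V} (hxy : G.Adj x y) (hπ : π x ≠ π y) :
    (G.contract π).Adj (π x) (π y) :=
  (fromRel_adj _ _ _).mpr ⟨hπ, .inl ⟨x, y, rfl, rfl, hxy⟩⟩

lemma nonempty_coloring_of_card_image_neighborFinset_lt {α : Type} [Fintype α] [DecidableEq α]
    [DecidableEq V] {u : V} [Fintype (G.neighborSet u)] {c : V → α}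
    (hc : ∀ ⦃x y⦄, x ≠ u → y ≠ u → G.Adj x y → c x ≠ c y)
    (hu : ((G.neighborFinset u).image c).card < Fintype.card α) : Nonempty (G.Coloring α) := by
  obtain ⟨a, -, ha⟩ :=
    Finset.exists_mem_notMem_of_card_lt_card (t := Finset.univ) (by simpa using hu)
  have hN : ∀ v, G.Adj u v → c v ≠ a := fun v hv h =>
    ha (Finset.mem_image.mpr ⟨v, (mem_neighborFinset G u v).mpr hv, h⟩)
  refine ⟨Coloring.mk (Function.update c u a) fun {x y} hxy => ?_⟩
  by_cases hx : x = u <;> by_cases hy : y = u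
  · exact absurd (hx.trans hy.symm) hxy.ne
  · simpa [hx, hy] using (hN y (hx ▸ hxy)).symm
  · simpa [hx, hy] using hN x (hy ▸ hxy.symm)
  · simpa [hx, hy] using hc hx hy hxy

end SimpleGraph

open SimpleGraph

variable {V W : Type}

lemma IsMinor.card_le [Fintype V] [Fintype W] {H : SimpleGraph W} {G : SimpleGraph V}
    (h : IsMinor H G) : Fintype.card W ≤ Fintype.card V := by
  obtain ⟨f, hne, -, hdisj, -⟩ := h
  choose g hg using hne
  refine Fintype.card_le_of_injective g fun a b hab => ?_
  by_contra hne
  exact Set.disjoint_left.mp (hdisj hne) (hg a) (hab ▸ hg b)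

lemma IsMinor.isProperMinor_of_card_lt [Fintype V] [Fintype W] {H : SimpleGraph W}
    {G : SimpleGraph V} (h : IsMinor H G) (hlt : Fintype.card W < Fintype.card V) :
    IsProperMinor H G :=
  ⟨h, fun h' => hlt.not_ge h'.card_le⟩

lemma isMinor_induce (G : SimpleGraph V) (s : Set V) : IsMinor (G.induce s) G := by
  refine ⟨fun w => {w.1}, fun w => Set.singleton_nonempty _,
    fun w => induce_connected_of_forall_adj rfl fun v hv hne => absurd hv hne, ?_, ?_⟩
  · intro a b hab
    simpa [Subtype.ext_iff] using hab
  · intro a b hab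
    exact ⟨a, rfl, b, rfl, hab⟩

lemma isMinor_contract {G : SimpleGraph V} {π : V → W} (hπ : Function.Surjective π)
    (hconn : ∀ w, (G.induce (π ⁻¹' {w})).Connected) : IsMinor (G.contract π) G := by
  refine ⟨fun w => π ⁻¹' {w}, fun w => hπ w, hconn,
    fun a b hab => (Set.disjoint_singleton.mpr hab).preimage π, ?_⟩
  rintro a b ⟨-, ⟨x, y, rfl, rfl, hxy⟩ | ⟨x, y, rfl, rfl, hxy⟩⟩
  · exact ⟨x, rfl, y, rfl, hxy⟩
  · exact ⟨y, rfl, x, rfl, hxy.symm⟩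

section StarContraction

variable [DecidableEq V] {G : SimpleGraph V} {u : V} {I : Finset V}

def contractStar (I : Finset V) (hu : u ∉ I) (v : V) : {v // v ∉ I} :=
  if hv : v ∈ I then ⟨u, hu⟩ else ⟨v, hv⟩

lemma coe_contractStar (hu : u ∉ I) (v : V) :
    (contractStar I hu v : V) = if v ∈ I then u else v := by
  unfold contractStar
  split_ifs <;> rfl

lemma contractStar_surjective (hu : u ∉ I) : Function.Surjective (contractStar I hu) :=
  fun w => ⟨w, Subtype.ext (by simp [coe_contractStar, w.2])⟩

lemma induce_contractStar_preimage_connected (hIN : ↑I ⊆ G.neighborSet u) (hu : u ∉ I)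
    (w : {v // v ∉ I}) : (G.induce (contractStar I hu ⁻¹' {w})).Connected := by
  refine induce_connected_of_forall_adj (u := w.1)
    (Subtype.ext (by simp [coe_contractStar, w.2])) fun v hv hvw => ?_
  have hv' := congrArg Subtype.val (Set.mem_singleton_iff.mp (Set.mem_preimage.mp hv))
  rw [coe_contractStar] at hv'
  split_ifs at hv' with hvI
  · exact hv' ▸ hIN hvI
  · exact absurd hv' hvw

lemma isProperMinor_contract_contractStar [Fintype V] (hIN : ↑I ⊆ G.neighborSet u)
    (hu : u ∉ I) (hI : I.Nonempty) : IsProperMinor (G.contract (contractStar I hu)) G := by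
  obtain ⟨i, hi⟩ := hI
  exact (isMinor_contract (contractStar_surjective hu)
    (induce_contractStar_preimage_connected hIN hu)).isProperMinor_of_card_lt
    (Fintype.card_subtype_lt (x := i) (by simpa using hi))

lemma contractStar_ne_of_adj (hu : u ∉ I) (hI : ∀ a ∈ I, ∀ b ∈ I, a ≠ b → ¬ G.Adj a b)
    {x y : V} (hx : x ≠ u) (hy : y ≠ u) (hxy : G.Adj x y) :
    contractStar I hu x ≠ contractStar I hu y := by
  intro h
  have h' := congrArg Subtype.val h
  simp only [coe_contractStar] at h'
  split_ifs at h' with hxI hyI hyI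
  · exact hI x hxI y hyI hxy.ne hxy
  · exact hy h'.symm
  · exact hx h'
  · exact hxy.ne h'

end StarContraction

namespace ContractionCritical

variable {k : ℕ} {G : SimpleGraph V}

lemma not_colorable (hG : ContractionCritical k G) (hk : 1 ≤ k) : ¬ G.Colorable (k - 1) :=
  fun h => by
    have := hG.1 ▸ h.chromaticNumber_le
    norm_cast at this
    omega

variable [Fintype V] [DecidableEq V] [DecidableRel G.Adj]

lemma le_degree_add_one (hG : ContractionCritical k G) (u : V) : k ≤ G.degree u + 1 := by
  by_contra! hlt
  obtain ⟨C⟩ := hG.2 _ _ ((isMinor_induce G {v | v ≠ u}).isProperMinor_of_card_lt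
    (Fintype.card_subtype_lt (x := u) (by simp)))
  apply hG.not_colorable (by omega)
  let c : V → Fin (k - 1) := fun v => if hv : v = u then ⟨0, by omega⟩ else C ⟨v, hv⟩
  refine nonempty_coloring_of_card_image_neighborFinset_lt (u := u) (c := c)
    (fun x y hx hy hxy => ?_) ?_
  · have hxy' : (G.induce {v | v ≠ u}).Adj ⟨x, hx⟩ ⟨y, hy⟩ := hxy
    simpa [c, hx, hy] using C.valid hxy'
  · calc _ ≤ (G.neighborFinset u).card := Finset.card_image_le
      _ < _ := by rw [card_neighborFinset_eq_degree, Fintype.card_fin]; omega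

lemma card_add_le_degree_add_two (hG : ContractionCritical k G) {u : V} {I : Finset V}
    (hIN : ↑I ⊆ G.neighborSet u) (hI : ∀ a ∈ I, ∀ b ∈ I, a ≠ b → ¬ G.Adj a b)
    (hne : I.Nonempty) : I.card + k ≤ G.degree u + 2 := by
  have hu : u ∉ I := fun h => G.loopless.irrefl u (hIN h)
  have hIsub : I ⊆ G.neighborFinset u := fun v hv => (mem_neighborFinset G u v).mpr (hIN hv)
  have hIdeg : I.card ≤ G.degree u :=
    card_neighborFinset_eq_degree G u ▸ Finset.card_le_card hIsub
  by_contra! hlt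
  obtain ⟨C⟩ := hG.2 _ _ (isProperMinor_contract_contractStar hIN hu hne)
  apply hG.not_colorable (by omega)
  set c := C ∘ contractStar I hu
  refine nonempty_coloring_of_card_image_neighborFinset_lt (u := u) (c := c)
    (fun x y hx hy hxy => ?_) ?_
  · exact C.valid (contract_adj_of_adj hxy (contractStar_ne_of_adj hu hI hx hy hxy))
  · have hsub : (G.neighborFinset u).image c ⊆
        insert (C ⟨u, hu⟩) ((G.neighborFinset u \ I).image c) := by
      intro a ha
      obtain ⟨v, hv, rfl⟩ := Finset.mem_image.mp ha
      by_cases hvI : v ∈ I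
      · simp [c, contractStar, hvI]
      · exact Finset.mem_insert_of_mem (Finset.mem_image_of_mem c (by simp [hv, hvI]))
    calc _ ≤ (insert (C ⟨u, hu⟩) ((G.neighborFinset u \ I).image c)).card :=
          Finset.card_le_card hsub
      _ ≤ (G.neighborFinset u \ I).card + 1 :=
          (Finset.card_insert_le _ _).trans (Nat.succ_le_succ Finset.card_image_le)
      _ = G.degree u - I.card + 1 := by
          rw [Finset.card_sdiff_of_subset hIsub, card_neighborFinset_eq_degree]
      _ < _ := by rw [Fintype.card_fin]; omega

end ContractionCritical

theorem stmt3 {V : Type} [Fintype V] (k : ℕ) (G : SimpleGraph V)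
    (hG : ContractionCritical k G) (u : V) :
    (alphaOn G (G.neighborSet u) : ℤ) ≤ ((G.neighborSet u).ncard : ℤ) - (k : ℤ) + 2 := by
  classical
  have hdeg := hG.le_degree_add_one u
  have hα : alphaOn G (G.neighborSet u) ≤ G.degree u + 2 - k := by
    refine csSup_le ⟨0, ∅, by simp⟩ ?_
    rintro _ ⟨I, hIN, rfl, hI⟩
    rcases I.eq_empty_or_nonempty with rfl | hne
    · simp
    · have := hG.card_add_le_degree_add_two hIN hI hne
      omega
  rw [Set.ncard_eq_toFinset_card', ← neighborFinset_def, card_neighborFinset_eq_degree]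
  omega
end

section
/- Let k ≥ 3 and let L be a graph with |V(L)| ≥ 2k+1. Suppose there is a vertex v ∈ V(L) such that every vertex x ∉ N[v] has at least 2k−1 common neighbors with v, and every pair of non-adjacent vertices x, y both different from v has at least 3k−2 common neighbors. Then L is k-linked. -/
open SimpleGraph

/-!
Every pair `(uᵢ, wᵢ)` that is not an edge is joined through a common neighbour `mᵢ` outside the
`2k` terminals, and these detour vertices are chosen pairwise distinct by Hall's theorem. A pair
avoiding `v` has at least `3k - 2` common neighbours, of which at most `2k - 2` are terminals, so
at least `k` candidates; since the terminals are distinct, at most one pair contains `v`, and that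
pair still has `2k - 1 - (2k - 2) = 1` candidate. Hence any set of pairs either contains one with
`k` candidates or is a single pair with one candidate, which is Hall's condition.
-/

open SimpleGraph Finset Function

lemma commonNbrs_comm {V : Type} (G : SimpleGraph V) (a b : V) :
    commonNbrs G a b = commonNbrs G b a := by
  simp only [commonNbrs, and_comm]

lemma commonNbrs_eq_card_filter {V : Type} [Fintype V] (G : SimpleGraph V) [DecidableRel G.Adj]
    (a b : V) : commonNbrs G a b = #{x | G.Adj a x ∧ G.Adj b x} := by
  rw [commonNbrs, ← Set.ncard_coe_finset, coe_filter]
  simp only [mem_univ, true_and]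

lemma Finset.card_add_two_le_card_sdiff_add_card {α : Type*} [DecidableEq α] {N T : Finset α}
    {a b : α} (hab : a ≠ b) (ha : a ∈ T) (hb : b ∈ T) (haN : a ∉ N) (hbN : b ∉ N) :
    #N + 2 ≤ #(N \ T) + #T := by
  have hinter : N ∩ T ⊆ (T.erase a).erase b := fun x hx => by
    rw [mem_inter] at hx
    exact mem_erase.2 ⟨fun h => hbN (h ▸ hx.1), mem_erase.2 ⟨fun h => haN (h ▸ hx.1), hx.2⟩⟩
  have hpair : #{a, b} ≤ #T := card_le_card (insert_subset ha (singleton_subset_iff.2 hb))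
  have := card_le_card hinter
  rw [card_erase_of_mem (mem_erase.2 ⟨hab.symm, hb⟩), card_erase_of_mem ha] at this
  rw [card_pair hab] at hpair
  have := card_sdiff_add_card_inter N T
  omega

lemma SimpleGraph.Walk.support_disjoint_of_disjoint_interiors {V : Type} {G : SimpleGraph V}
    {k : ℕ} {u w : Fin k → V} (hinj : Injective (Sum.elim u w)) (S : Fin k → Set V)
    (hS : Pairwise (Disjoint on S)) (hST : ∀ i j, u j ∉ S i ∧ w j ∉ S i)
    (P : ∀ i, G.Walk (u i) (w i)) (hP : ∀ i, ∀ x ∈ (P i).support, x = u i ∨ x = w i ∨ x ∈ S i) :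
    ∀ i j, i ≠ j → ∀ x ∈ (P i).support, x ∉ (P j).support := by
  obtain ⟨hu, hw, huw⟩ := Sum.elim_injective.1 hinj
  intro i j hij x hxi hxj
  rcases hP i x hxi with rfl | rfl | hx <;> rcases hP j _ hxj with h | h | h
  all_goals first
    | exact hu.ne hij h | exact hw.ne hij h | exact huw _ _ h | exact huw _ _ h.symm
    | exact (hST j i).1 h | exact (hST j i).2 h
    | exact (hST i j).1 (h ▸ hx) | exact (hST i j).2 (h ▸ hx)
    | exact Set.disjoint_left.1 (hS hij) hx h

lemma eq_of_injective_sumElim {V : Type} {k : ℕ} {u w : Fin k → V}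
    (hinj : Injective (Sum.elim u w)) {v : V} {i j : Fin k}
    (hi : u i = v ∨ w i = v) (hj : u j = v ∨ w j = v) : i = j := by
  have index : ∀ {i}, u i = v ∨ w i = v → ∃ a, Sum.elim u w a = v ∧ Sum.elim id id a = i :=
    fun {i} h => h.elim (fun h => ⟨Sum.inl i, h, rfl⟩) (fun h => ⟨Sum.inr i, h, rfl⟩)
  obtain ⟨a, rfl, rfl⟩ := index hi
  obtain ⟨b, hb, rfl⟩ := index hj
  rw [hinj hb]

section Detours

variable {V : Type} [DecidableEq V] {k : ℕ} (u w : Fin k → V)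

def terminals : Finset V := univ.image (Sum.elim u w)

lemma card_terminals_le : #(terminals u w) ≤ 2 * k := by
  simpa [terminals, two_mul] using card_image_le (s := univ) (f := Sum.elim u w)

variable [Fintype V] (L : SimpleGraph V) [DecidableRel L.Adj]

def detours (i : Fin k) : Finset V :=
  ({x | L.Adj (u i) x ∧ L.Adj (w i) x} : Finset V) \ terminals u w

variable {u w}

@[simp]
lemma mem_detours {i : Fin k} {x : V} :
    x ∈ detours u w L i ↔ (L.Adj (u i) x ∧ L.Adj (w i) x) ∧ ∀ j, u j ≠ x ∧ w j ≠ x := by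
  simp [detours, terminals, forall_and]

lemma commonNbrs_le_card_detours_add (hinj : Injective (Sum.elim u w)) (i : Fin k) :
    commonNbrs L (u i) (w i) ≤ #(detours u w L i) + (2 * k - 2) := by
  have huw : u i ≠ w i := (Sum.elim_injective.1 hinj).2.2 i i
  have := card_add_two_le_card_sdiff_add_card (N := {x | L.Adj (u i) x ∧ L.Adj (w i) x})
    (T := terminals u w) huw
    (mem_image_of_mem _ (mem_univ (Sum.inl i))) (mem_image_of_mem _ (mem_univ (Sum.inr i)))
    (by simp) (by simp)
  have := card_terminals_le u w
  rw [commonNbrs_eq_card_filter]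
  unfold detours
  omega

variable {v : V} (hinj : Injective (Sum.elim u w))
include hinj

lemma le_card_detours
    (h2 : ∀ x y : V, x ≠ y → x ≠ v → y ≠ v → ¬ L.Adj x y → 3 * k - 2 ≤ commonNbrs L x y)
    {i : Fin k} (hadj : ¬ L.Adj (u i) (w i)) (hu : u i ≠ v) (hw : w i ≠ v) :
    k ≤ #(detours u w L i) := by
  have huw : u i ≠ w i := (Sum.elim_injective.1 hinj).2.2 i i
  have := h2 _ _ huw hu hw hadj
  have := commonNbrs_le_card_detours_add L hinj i
  have := i.pos
  omega

lemma detours_nonempty (h1 : ∀ x : V, x ≠ v → ¬ L.Adj v x → 2 * k - 1 ≤ commonNbrs L v x)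
    (h2 : ∀ x y : V, x ≠ y → x ≠ v → y ≠ v → ¬ L.Adj x y → 3 * k - 2 ≤ commonNbrs L x y)
    {i : Fin k} (hadj : ¬ L.Adj (u i) (w i)) : (detours u w L i).Nonempty := by
  have huw : u i ≠ w i := (Sum.elim_injective.1 hinj).2.2 i i
  rw [← card_pos]
  have := commonNbrs_le_card_detours_add L hinj i
  have := i.pos
  by_cases hu : u i = v
  · subst hu
    have := h1 (w i) huw.symm hadj
    omega
  by_cases hw : w i = v
  · subst hw
    have := h1 (u i) huw (fun h => hadj h.symm)
    rw [commonNbrs_comm] at this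
    omega
  have := le_card_detours L hinj h2 hadj hu hw
  omega

lemma exists_injective_mem_detours
    (h1 : ∀ x : V, x ≠ v → ¬ L.Adj v x → 2 * k - 1 ≤ commonNbrs L v x)
    (h2 : ∀ x y : V, x ≠ y → x ≠ v → y ≠ v → ¬ L.Adj x y → 3 * k - 2 ≤ commonNbrs L x y) :
    ∃ f : {i // ¬ L.Adj (u i) (w i)} → V, Injective f ∧ ∀ i, f i ∈ detours u w L i.1 := by
  rw [← all_card_le_biUnion_card_iff_exists_injective]
  intro s
  by_cases hs : ∃ i ∈ s, u i ≠ v ∧ w i ≠ v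
  · obtain ⟨i, hi, hu, hw⟩ := hs
    calc #s ≤ k := (card_le_univ s).trans ((Fintype.card_subtype_le _).trans (by simp))
      _ ≤ #(detours u w L i) := le_card_detours L hinj h2 i.2 hu hw
      _ ≤ #(s.biUnion _) := card_le_card (subset_biUnion_of_mem (fun i => detours u w L i.1) hi)
  push Not at hs
  have hs_le_one : #s ≤ 1 := card_le_one.2 fun i hi j hj => Subtype.ext <|
    eq_of_injective_sumElim hinj (or_iff_not_imp_left.2 (hs i hi)) (or_iff_not_imp_left.2 (hs j hj))
  rcases s.eq_empty_or_nonempty with rfl | ⟨i, hi⟩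
  · simp
  · exact hs_le_one.trans <| card_pos.2 <|
      (detours_nonempty L hinj h1 h2 i.2).mono (subset_biUnion_of_mem _ hi)

lemma exists_path_via_detour {f : {i // ¬ L.Adj (u i) (w i)} → V}
    (hf : ∀ i, f i ∈ detours u w L i.1) (i : Fin k) :
    ∃ p : L.Walk (u i) (w i), p.IsPath ∧ ∀ x ∈ p.support,
      x = u i ∨ x = w i ∨ x ∈ Set.range fun h : ¬ L.Adj (u i) (w i) => f ⟨i, h⟩ := by
  have huw : u i ≠ w i := (Sum.elim_injective.1 hinj).2.2 i i
  by_cases hadj : L.Adj (u i) (w i)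
  · refine ⟨hadj.toWalk, by simp [huw], fun x hx => ?_⟩
    simp only [Walk.support_cons, Walk.support_nil, List.mem_cons, List.not_mem_nil] at hx
    tauto
  · obtain ⟨⟨hum, hwm⟩, -⟩ := (mem_detours L).1 (hf ⟨i, hadj⟩)
    refine ⟨.cons hum (.cons hwm.symm .nil), by simp [huw, hum.ne, hwm.ne'], fun x hx => ?_⟩
    simp only [Walk.support_cons, Walk.support_nil, List.mem_cons, List.not_mem_nil] at hx
    rcases hx with rfl | rfl | rfl | hx
    exacts [.inl rfl, .inr (.inr ⟨hadj, rfl⟩), .inr (.inl rfl), hx.elim]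

end Detours

theorem stmt18_general {V : Type} [Fintype V] (k : ℕ) (L : SimpleGraph V) (v : V)
    (h1 : ∀ x : V, x ≠ v → ¬ L.Adj v x → 2 * k - 1 ≤ commonNbrs L v x)
    (h2 : ∀ x y : V, x ≠ y → x ≠ v → y ≠ v → ¬ L.Adj x y →
      3 * k - 2 ≤ commonNbrs L x y) :
    Linked L k := by
  classical
  intro u w hinj
  obtain ⟨f, hf_inj, hf⟩ := exists_injective_mem_detours L hinj h1 h2
  choose P hP hPS using exists_path_via_detour L hinj hf
  refine ⟨P, hP, Walk.support_disjoint_of_disjoint_interiors hinj _ ?_ ?_ P hPS⟩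
  · refine fun i j hij => Set.disjoint_left.2 ?_
    rintro _ ⟨_, rfl⟩ ⟨_, hfij⟩
    exact hij (congrArg Subtype.val (hf_inj hfij)).symm
  · refine fun i j => ⟨?_, ?_⟩ <;> rintro ⟨_, hx⟩
    exacts [(((mem_detours L).1 (hf _)).2 j).1 hx.symm, (((mem_detours L).1 (hf _)).2 j).2 hx.symm]

theorem stmt18 {V : Type} [Fintype V] (k : ℕ) (hk : 3 ≤ k) (L : SimpleGraph V)
    (hcard : 2 * k + 1 ≤ Fintype.card V) (v : V)
    (h1 : ∀ x : V, x ≠ v → ¬ L.Adj v x → 2 * k - 1 ≤ commonNbrs L v x)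
    (h2 : ∀ x y : V, x ≠ y → x ≠ v → y ≠ v → ¬ L.Adj x y →
      3 * k - 2 ≤ commonNbrs L x y) :
    Linked L k :=
  stmt18_general k L v h1 h2
end
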